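/- arXiv:2005.10379 — 2 statements merged into one kernel-verified Lean document; each statement's English description precedes it below -/
import Mathlib

section
/- Let A ∈ ℂ^{M×N} be a matrix with columns a₁,…,a_N, and for each i ∈ {1,…,N} let Bᵢ ∈ ℂ^{m×nᵢ}. Define the hierarchical measurement operator H by H(x₁,…,x_N) = ∑ᵢ aᵢ ⊗ (Bᵢ xᵢ), i.e. the vector in ℂ^{M·m} with entries H(x)_{(j,k)} = ∑ᵢ A_{j,i} (Bᵢ xᵢ)_k. Suppose each Bᵢ satisfies the σᵢ-RIP with constant δᵢ ≥ 0, and A satisfies the s-RIP with constant δ_A ≥ 0. Set δ_B = sup_{i} δᵢ. Then for every (s,(σ₁,…,σ_N))-sparse block vector x = (x₁,…,x_N), one has |‖H(x)‖² − ‖x‖²| ≤ (δ_A + δ_B + δ_A·δ_B)·‖x‖², where ‖x‖² = ∑ᵢ ‖xᵢ‖² with Euclidean norms. -/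
open scoped BigOperators

noncomputable section

/-- Squared Euclidean norm of a finite complex vector. -/
def sqNorm {ι : Type*} [Fintype ι] (v : ι → ℂ) : ℝ := ∑ k, ‖v k‖ ^ 2

/-- A vector has at most `σ` nonzero entries. -/
def VecSparse {n : ℕ} (σ : ℕ) (v : Fin n → ℂ) : Prop := {k | v k ≠ 0}.ncard ≤ σ

/-- The restricted isometry property with sparsity `σ` and constant `δ`. -/
def RIP {m n : ℕ} (σ : ℕ) (δ : ℝ) (B : Matrix (Fin m) (Fin n) ℂ) : Prop :=
  ∀ g : Fin n → ℂ, VecSparse σ g →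
    |sqNorm (B.mulVec g) - sqNorm g| ≤ δ * sqNorm g

/-- `(s, σ)`-hierarchical sparsity of a block vector. -/
def BlockSparse {N : ℕ} {n : Fin N → ℕ} (s : ℕ) (σ : Fin N → ℕ)
    (x : ∀ i, Fin (n i) → ℂ) : Prop :=
  {i | x i ≠ 0}.ncard ≤ s ∧ ∀ i, VecSparse (σ i) (x i)

/-- The hierarchical measurement operator `H(x) = ∑ i, aᵢ ⊗ (Bᵢ xᵢ)`. -/
def Hop {M N m : ℕ} {n : Fin N → ℕ} (A : Matrix (Fin M) (Fin N) ℂ)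
    (B : ∀ i, Matrix (Fin m) (Fin (n i)) ℂ) (x : ∀ i, Fin (n i) → ℂ) :
    Fin M × Fin m → ℂ :=
  fun p => ∑ i, A p.1 i * (B i).mulVec (x i) p.2

lemma sqNorm_nonneg' {ι : Type*} [Fintype ι] (v : ι → ℂ) : 0 ≤ sqNorm v :=
  Finset.sum_nonneg fun _ _ => by positivity

theorem hierarchical_HiRIP {M N m : ℕ} {n : Fin N → ℕ} (s : ℕ) (σ : Fin N → ℕ)
    (A : Matrix (Fin M) (Fin N) ℂ) (B : ∀ i, Matrix (Fin m) (Fin (n i)) ℂ)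
    (δ : Fin N → ℝ) (δA : ℝ) (hδ : ∀ i, 0 ≤ δ i) (hδA : 0 ≤ δA)
    (hB : ∀ i, RIP (σ i) (δ i) (B i)) (hA : RIP s δA A)
    (x : ∀ i, Fin (n i) → ℂ) (hx : BlockSparse s σ x) :
    |sqNorm (Hop A B x) - ∑ i, sqNorm (x i)| ≤
      (δA + (⨆ i, δ i) + δA * ⨆ i, δ i) * ∑ i, sqNorm (x i) := by
  rcases Nat.eq_zero_or_pos N with hN | hN
  · subst hN
    simp [Hop, sqNorm]
  have hne : Nonempty (Fin N) := ⟨⟨0, hN⟩⟩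
  set δB := ⨆ i, δ i with hδB
  have hbdd : BddAbove (Set.range δ) := Set.Finite.bddAbove (Set.finite_range δ)
  have hle : ∀ i, δ i ≤ δB := fun i => le_ciSup hbdd i
  have hδB0 : 0 ≤ δB := le_trans (hδ ⟨0, hN⟩) (hle _)
  set S := ∑ i, sqNorm (x i) with hS
  have hS0 : 0 ≤ S := Finset.sum_nonneg fun i _ => sqNorm_nonneg' _
  set y : Fin m → Fin N → ℂ := fun k i => (B i).mulVec (x i) k with hy
  set T := ∑ i, sqNorm ((B i).mulVec (x i)) with hT
  have hT0 : 0 ≤ T := Finset.sum_nonneg fun i _ => sqNorm_nonneg' _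
  have hH2 : sqNorm (Hop A B x) = ∑ k, sqNorm (A.mulVec (y k)) := by
    simp only [sqNorm, Hop, Matrix.mulVec, dotProduct, hy]
    rw [Fintype.sum_prod_type, Finset.sum_comm]
  have hTeq : T = ∑ k, sqNorm (y k) := by
    simp only [sqNorm, hT, hy]
    rw [Finset.sum_comm]
  have hysp : ∀ k, VecSparse s (y k) := by
    intro k
    have hsub : {i | y k i ≠ 0} ⊆ {i | x i ≠ 0} := by
      intro i hi
      simp only [Set.mem_setOf_eq] at *
      intro hxi
      apply hi
      show (B i).mulVec (x i) k = 0
      rw [hxi, Matrix.mulVec_zero]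
      rfl
    exact le_trans (Set.ncard_le_ncard hsub (Set.toFinite _)) hx.1
  have hA2 : |sqNorm (Hop A B x) - T| ≤ δA * T := by
    rw [hH2, hTeq, ← Finset.sum_sub_distrib]
    calc |∑ k, (sqNorm (A.mulVec (y k)) - sqNorm (y k))|
        ≤ ∑ k, |sqNorm (A.mulVec (y k)) - sqNorm (y k)| :=
          Finset.abs_sum_le_sum_abs _ _
      _ ≤ ∑ k, δA * sqNorm (y k) := Finset.sum_le_sum fun k _ => hA (y k) (hysp k)
      _ = δA * ∑ k, sqNorm (y k) := by rw [Finset.mul_sum]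
  have hB2 : |T - S| ≤ δB * S := by
    rw [hT, hS, ← Finset.sum_sub_distrib]
    calc |∑ i, (sqNorm ((B i).mulVec (x i)) - sqNorm (x i))|
        ≤ ∑ i, |sqNorm ((B i).mulVec (x i)) - sqNorm (x i)| :=
          Finset.abs_sum_le_sum_abs _ _
      _ ≤ ∑ i, δB * sqNorm (x i) := Finset.sum_le_sum fun i _ =>
          le_trans (hB i (x i) (hx.2 i))
            (mul_le_mul_of_nonneg_right (hle i) (sqNorm_nonneg' _))
      _ = δB * ∑ i, sqNorm (x i) := by rw [Finset.mul_sum]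
  have hTS : T ≤ (1 + δB) * S := by
    have := (abs_sub_le_iff.mp hB2).1
    linarith
  calc |sqNorm (Hop A B x) - S|
      ≤ |sqNorm (Hop A B x) - T| + |T - S| := abs_sub_le _ _ _
    _ ≤ δA * T + δB * S := add_le_add hA2 hB2
    _ ≤ δA * ((1 + δB) * S) + δB * S := by nlinarith
    _ = (δA + δB + δA * δB) * S := by ring
end
end

section
/- Let A ∈ ℂ^{M×N} satisfy the s-RIP with constant δ_A ≥ 0 and let B ∈ ℂ^{m×n} satisfy the σ-RIP with constant δ_B ≥ 0. Consider the Kronecker product measurement: for a block vector x = (x₁,…,x_N) with each xᵢ ∈ ℂ^n, define (A⊗B)(x) = ∑ᵢ aᵢ ⊗ (Bxᵢ) ∈ ℂ^{M·m}, where aᵢ are the columns of A. Then for every (s,(σ,…,σ))-sparse x (at most s nonzero blocks, each with at most σ nonzero entries): |‖(A⊗B)(x)‖² − ‖x‖²| ≤ (δ_A + δ_B + δ_A·δ_B)·‖x‖², where ‖x‖² = ∑ᵢ‖xᵢ‖². -/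
open scoped BigOperators

noncomputable section

/-- The Kronecker product measurement `(A ⊗ B)(x) = ∑ i, aᵢ ⊗ (B xᵢ)`. -/
def KronOp {M N m n : ℕ} (A : Matrix (Fin M) (Fin N) ℂ)
    (B : Matrix (Fin m) (Fin n) ℂ) (x : Fin N → Fin n → ℂ) :
    Fin M × Fin m → ℂ :=
  fun p => ∑ i, A p.1 i * B.mulVec (x i) p.2

theorem kronecker_HiRIP {M N m n : ℕ} (s σ : ℕ)
    (A : Matrix (Fin M) (Fin N) ℂ) (B : Matrix (Fin m) (Fin n) ℂ)
    (δA δB : ℝ) (hδA : 0 ≤ δA) (hδB : 0 ≤ δB)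
    (hA : RIP s δA A) (hB : RIP σ δB B)
    (x : Fin N → Fin n → ℂ)
    (hxblocks : {i | x i ≠ 0}.ncard ≤ s)
    (hxin : ∀ i, VecSparse σ (x i)) :
    |sqNorm (KronOp A B x) - ∑ i, sqNorm (x i)| ≤
      (δA + δB + δA * δB) * ∑ i, sqNorm (x i) := by

  set Z := ∑ i, sqNorm (x i) with hZdef
  set X := sqNorm (KronOp A B x) with hXdef
  have hZ0 : 0 ≤ Z := Finset.sum_nonneg fun i _ => Finset.sum_nonneg fun k _ => by positivity
  set Y := ∑ i, sqNorm (B.mulVec (x i)) with hYdef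
  have hY0 : 0 ≤ Y := Finset.sum_nonneg fun i _ => Finset.sum_nonneg fun k _ => by positivity
  have hYZ : |Y - Z| ≤ δB * Z := by
    rw [hYdef, hZdef, ← Finset.sum_sub_distrib]
    calc |∑ i, (sqNorm (B.mulVec (x i)) - sqNorm (x i))|
        ≤ ∑ i, |sqNorm (B.mulVec (x i)) - sqNorm (x i)| := Finset.abs_sum_le_sum_abs _ _
      _ ≤ ∑ i, δB * sqNorm (x i) := Finset.sum_le_sum fun i _ => hB (x i) (hxin i)
      _ = δB * Z := by rw [hZdef, Finset.mul_sum]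
  have hX : X = ∑ k : Fin m, sqNorm (A.mulVec fun i => B.mulVec (x i) k) := by
    simp only [hXdef, sqNorm, KronOp, Matrix.mulVec, dotProduct]
    rw [Fintype.sum_prod_type]
    exact Finset.sum_comm
  have hgk : ∀ k, VecSparse s (fun i => B.mulVec (x i) k) := by
    intro k
    refine le_trans (Set.ncard_le_ncard ?_ (Set.toFinite _)) hxblocks
    intro i hi
    simp only [Set.mem_setOf_eq] at hi ⊢
    intro h
    apply hi
    rw [h, Matrix.mulVec_zero]
    rfl
  have hsum : ∑ k : Fin m, sqNorm (fun i => B.mulVec (x i) k) = Y := by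
    simp only [sqNorm, hYdef]
    exact Finset.sum_comm
  have hXY : |X - Y| ≤ δA * Y := by
    rw [hX, ← hsum, ← Finset.sum_sub_distrib]
    calc |∑ k : Fin m, (sqNorm (A.mulVec fun i => B.mulVec (x i) k) -
            sqNorm (fun i => B.mulVec (x i) k))|
        ≤ ∑ k : Fin m, |sqNorm (A.mulVec fun i => B.mulVec (x i) k) -
            sqNorm (fun i => B.mulVec (x i) k)| := Finset.abs_sum_le_sum_abs _ _
      _ ≤ ∑ k : Fin m, δA * sqNorm (fun i => B.mulVec (x i) k) :=
            Finset.sum_le_sum fun k _ => hA _ (hgk k)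
      _ = δA * ∑ k : Fin m, sqNorm (fun i => B.mulVec (x i) k) := by rw [Finset.mul_sum]
  have h1 := abs_sub_le X Y Z
  have h2 := (abs_le.mp hYZ).2
  have h3 := (abs_le.mp hXY).2
  have h4 := neg_le_of_abs_le (abs_sub_le X Y Z)
  nlinarith [abs_nonneg (X - Z)]
end
end
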